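/- arXiv:1804.06867 — 2 statements merged into one kernel-verified Lean document; each statement's English description precedes it below -/
import Mathlib

section
/- Let (a,b,c) be a deterministic menu with a ≤ b ≤ c and c > a+b for two independent items with values v1 ~ D1, v2 ~ D2. If Pr[v1 ∈ [a, c−b)] · a ≤ Pr[v1 ≥ c−b] · (c − (a+b)), then the additive menu (c−b, b, c) yields expected revenue at least that of (a,b,c). -/
open MeasureTheory

/-- Payment made by a utility-maximizing additive buyer with values `(v1, v2)` facing the
deterministic menu charging `a` for item 1, `b` for item 2, `c` for the pair;
ties are broken in favor of the higher payment. -/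
noncomputable def pay (a b c v1 v2 : ℝ) : ℝ :=
  let u1 := v1 - a
  let u2 := v2 - b
  let u12 := v1 + v2 - c
  let m := max (max 0 u1) (max u2 u12)
  max (if u1 = m then a else 0) (max (if u2 = m then b else 0) (if u12 = m then c else 0))

/-- Expected revenue of the menu `(a, b, c)` when values are drawn from `μ`. -/
noncomputable def rev (μ : Measure (ℝ × ℝ)) (a b c : ℝ) : ℝ :=
  ∫ v, pay a b c v.1 v.2 ∂μ

lemma pay_nonneg (a b c v1 v2 : ℝ) (ha : 0 ≤ a) (hb : 0 ≤ b) (hc : 0 ≤ c) :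
    0 ≤ pay a b c v1 v2 := by
  unfold pay
  dsimp only
  split_ifs <;> simp [*, le_max_iff]

lemma pay_le (a b c v1 v2 : ℝ) (hc : 0 ≤ c) (hac : a ≤ c) (hbc : b ≤ c) :
    pay a b c v1 v2 ≤ c := by
  unfold pay
  dsimp only
  split_ifs <;> simp [*, max_le_iff]

lemma measurable_pay (a b c : ℝ) : Measurable (fun v : ℝ × ℝ => pay a b c v.1 v.2) := by
  unfold pay
  dsimp only
  have h1 : Measurable (fun v : ℝ × ℝ => v.1 - a) := measurable_fst.sub measurable_const
  have h2 : Measurable (fun v : ℝ × ℝ => v.2 - b) := measurable_snd.sub measurable_const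
  have h12 : Measurable (fun v : ℝ × ℝ => v.1 + v.2 - c) :=
    (measurable_fst.add measurable_snd).sub measurable_const
  have hm : Measurable (fun v : ℝ × ℝ =>
      max (max 0 (v.1 - a)) (max (v.2 - b) (v.1 + v.2 - c))) :=
    (measurable_const.max h1).max (h2.max h12)
  exact ((Measurable.ite (measurableSet_eq_fun h1 hm) measurable_const measurable_const).max
    ((Measurable.ite (measurableSet_eq_fun h2 hm) measurable_const measurable_const).max
      (Measurable.ite (measurableSet_eq_fun h12 hm) measurable_const measurable_const)))

/-- When `v2 < b` and `a + b ≤ c`, the buyer buys item 1 alone iff `a ≤ v1`. -/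
lemma pay_low (a b c v1 v2 : ℝ) (ha : 0 ≤ a) (hv2 : v2 < b) (habc : a + b ≤ c) :
    pay a b c v1 v2 = if a ≤ v1 then a else 0 := by
  unfold pay
  dsimp only
  by_cases hv1 : a ≤ v1
  · have hm : max (max 0 (v1 - a)) (max (v2 - b) (v1 + v2 - c)) = v1 - a := by
      rw [max_eq_right (by linarith : (0:ℝ) ≤ v1 - a)]
      exact max_eq_left (max_le (by linarith) (by linarith))
    rw [hm, if_pos rfl, if_neg (by intro h; linarith), if_neg (by intro h; linarith),
      if_pos hv1]
    rw [max_self, max_eq_left ha]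
  · have hm : max (max 0 (v1 - a)) (max (v2 - b) (v1 + v2 - c)) = 0 := by
      rw [max_eq_left (by linarith : v1 - a ≤ (0:ℝ))]
      exact max_eq_left (max_le (by linarith) (by linarith))
    rw [hm, if_neg (by intro h; linarith), if_neg (by intro h; linarith),
      if_neg (by intro h; linarith), if_neg hv1, max_self, max_self]

lemma pay_high_new (b c v1 v2 : ℝ) (hv2 : b ≤ v2) (hb : 0 ≤ b) (hbc : b ≤ c)
    (hv1 : c - b ≤ v1) : pay (c - b) b c v1 v2 = c := by
  unfold pay
  dsimp only
  have hm : max (max 0 (v1 - (c - b))) (max (v2 - b) (v1 + v2 - c)) = v1 + v2 - c := by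
    rw [max_eq_right (by linarith : v2 - b ≤ v1 + v2 - c)]
    exact max_eq_right (max_le (by linarith) (by linarith))
  rw [hm, if_pos rfl]
  apply le_antisymm
  · refine max_le ?_ (max_le ?_ le_rfl) <;> split_ifs <;> linarith
  · exact le_max_of_le_right (le_max_right _ _)

lemma pay_high_old (a b c v1 v2 : ℝ) (hv2 : b ≤ v2) (ha : 0 ≤ a) (hab : a ≤ b)
    (hv1 : v1 < c - b) : pay a b c v1 v2 ≤ b := by
  unfold pay
  dsimp only
  have h12 : v1 + v2 - c < max (max 0 (v1 - a)) (max (v2 - b) (v1 + v2 - c)) :=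
    lt_of_lt_of_le (show v1 + v2 - c < v2 - b by linarith)
      (le_max_of_le_right (le_max_left _ _))
  rw [if_neg (ne_of_lt h12)]
  refine max_le ?_ (max_le ?_ (by linarith)) <;> split_ifs <;> linarith

lemma pay_high_new' (b c v1 v2 : ℝ) (hv2 : b ≤ v2) (hb : 0 ≤ b) (hv1 : v1 < c - b) :
    pay (c - b) b c v1 v2 = b := by
  unfold pay
  dsimp only
  have hm : max (max 0 (v1 - (c - b))) (max (v2 - b) (v1 + v2 - c)) = v2 - b := by
    rw [max_eq_left (by linarith : v1 - (c - b) ≤ (0:ℝ)),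
      max_eq_left (by linarith : v1 + v2 - c ≤ v2 - b)]
    exact max_eq_right (by linarith)
  rw [hm, if_pos rfl, if_neg (by intro h; linarith), if_neg (by intro h; linarith)]
  rw [max_eq_left hb, max_eq_right hb]

lemma integrable_pay_slice (μ : Measure ℝ) [IsProbabilityMeasure μ] (a b c v2 : ℝ)
    (ha : 0 ≤ a) (hb : 0 ≤ b) (hc : 0 ≤ c) (hac : a ≤ c) (hbc : b ≤ c) :
    Integrable (fun x => pay a b c x v2) μ := by
  refine (integrable_const c).mono' ?_ ?_
  · exact ((measurable_pay a b c).comp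
      (measurable_id.prodMk measurable_const)).aestronglyMeasurable
  · refine Filter.Eventually.of_forall fun x => ?_
    rw [Real.norm_eq_abs, abs_le]
    exact ⟨by linarith [pay_nonneg a b c x v2 ha hb hc], pay_le a b c x v2 hc hac hbc⟩

lemma integrable_pay_prod (μ1 μ2 : Measure ℝ) [IsProbabilityMeasure μ1]
    [IsProbabilityMeasure μ2] (a b c : ℝ)
    (ha : 0 ≤ a) (hb : 0 ≤ b) (hc : 0 ≤ c) (hac : a ≤ c) (hbc : b ≤ c) :
    Integrable (fun v : ℝ × ℝ => pay a b c v.1 v.2) (μ1.prod μ2) := by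
  refine (integrable_const c).mono' (measurable_pay a b c).aestronglyMeasurable ?_
  refine Filter.Eventually.of_forall fun v => ?_
  rw [Real.norm_eq_abs, abs_le]
  exact ⟨by linarith [pay_nonneg a b c v.1 v.2 ha hb hc], pay_le a b c v.1 v.2 hc hac hbc⟩

theorem stmt2 (μ1 μ2 : Measure ℝ) [IsProbabilityMeasure μ1] [IsProbabilityMeasure μ2]
    (h1 : μ1 (Set.Iio 0) = 0) (h2 : μ2 (Set.Iio 0) = 0)
    (a b c : ℝ) (ha : 0 ≤ a) (hab : a ≤ b) (hbc : b ≤ c) (hsup : a + b < c)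
    (hcond : (μ1 (Set.Ico a (c - b))).toReal * a ≤
      (μ1 (Set.Ici (c - b))).toReal * (c - (a + b))) :
    rev (μ1.prod μ2) a b c ≤ rev (μ1.prod μ2) (c - b) b c := by
  have hb : 0 ≤ b := le_trans ha hab
  have hc : 0 ≤ c := le_trans hb hbc
  have hacb : a < c - b := by linarith
  have hcb0 : 0 ≤ c - b := by linarith
  have hcbc : c - b ≤ c := by linarith
  have hIold : Integrable (fun v : ℝ × ℝ => pay a b c v.1 v.2) (μ1.prod μ2) :=
    integrable_pay_prod μ1 μ2 a b c ha hb hc (by linarith) hbc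
  have hInew : Integrable (fun v : ℝ × ℝ => pay (c - b) b c v.1 v.2) (μ1.prod μ2) :=
    integrable_pay_prod μ1 μ2 (c - b) b c hcb0 hb hc hcbc hbc
  rw [rev, rev, integral_prod_symm _ hIold, integral_prod_symm _ hInew]
  refine integral_mono hIold.integral_prod_right hInew.integral_prod_right fun v2 => ?_
  simp only
  by_cases hv2 : b ≤ v2
  · -- pointwise inequality in v1
    refine integral_mono (integrable_pay_slice μ1 a b c v2 ha hb hc (by linarith) hbc)
      (integrable_pay_slice μ1 (c - b) b c v2 hcb0 hb hc hcbc hbc) fun v1 => ?_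
    simp only
    by_cases hv1 : c - b ≤ v1
    · rw [pay_high_new b c v1 v2 hv2 hb hbc hv1]
      exact pay_le a b c v1 v2 hc (by linarith) hbc
    · rw [pay_high_new' b c v1 v2 hv2 hb (lt_of_not_ge hv1)]
      exact pay_high_old a b c v1 v2 hv2 ha hab (lt_of_not_ge hv1)
  · -- v2 < b : both sides are indicator integrals
    have hv2' : v2 < b := lt_of_not_ge hv2
    have key : ∀ a' : ℝ, 0 ≤ a' → a' + b ≤ c →
        ∫ v1, pay a' b c v1 v2 ∂μ1 = (μ1 (Set.Ici a')).toReal * a' := by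
      intro a' ha' habc'
      have : (fun v1 => pay a' b c v1 v2) =
          fun v1 => (Set.Ici a').indicator (fun _ => a') v1 := by
        funext v1
        rw [pay_low a' b c v1 v2 ha' hv2' habc', Set.indicator_apply]
        simp [Set.mem_Ici]
      rw [this, integral_indicator_const _ measurableSet_Ici, smul_eq_mul]
      rfl
    rw [key a ha (le_of_lt hsup), key (c - b) hcb0 (by linarith)]
    have hsplit : μ1 (Set.Ici a) = μ1 (Set.Ico a (c - b)) + μ1 (Set.Ici (c - b)) := by
      rw [← Set.Ico_union_Ici_eq_Ici (le_of_lt hacb)]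
      exact measure_union (by
        rw [Set.disjoint_left]
        intro x hx hx'
        exact absurd (Set.mem_Ici.mp hx') (not_le.mpr hx.2)) measurableSet_Ici
    rw [hsplit, ENNReal.toReal_add (measure_ne_top μ1 _) (measure_ne_top μ1 _)]
    nlinarith [ENNReal.toReal_nonneg (a := μ1 (Set.Ici (c - b))),
      ENNReal.toReal_nonneg (a := μ1 (Set.Ico a (c - b)))]
end

section
/- For the correlated two-item distribution taking value (4,0) with probability 1/2 − ε, (0,4) with probability 1/2 − ε, and (1/ε, 1/ε) with probability 2ε (for small ε > 0): the deterministic menu (4, 4, 1/ε) achieves revenue at least 6 − 8ε, while every submodular deterministic menu (a,b,c) with c ≤ a+b achieves revenue at most 4 + 8ε. Hence for sufficiently small ε, DRev(D) ≥ (3/2 − O(ε)) · SMDRev(D). -/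
/-!
Against the menu `(4, 4, 1/ε)` each low type buys its item for `4` and the high type buys the
bundle for `1/ε`, earning `(1 - 2ε)·4 + 2ε·(1/ε)`. A submodular menu cannot repeat this: the high
type may always buy the cheaper item instead of the bundle, so it pays at most `min a b + 1/ε`,
while a low type pays nothing once its item costs more than `4`. If both items cost at most `4`
the bundle costs at most `8`; otherwise at least one low type is lost. Either way the revenue is
about `4`, whereas no menu at all earns more than `8`, so the suprema are finite.
-/

open MeasureTheory

section Payment

variable {a b c v1 v2 : ℝ}

theorem pay_comm (a b c v1 v2 : ℝ) : pay a b c v1 v2 = pay b a c v2 v1 := by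
  have hm : max (max 0 (v2 - b)) (max (v1 - a) (v2 + v1 - c)) =
      max (max 0 (v1 - a)) (max (v2 - b) (v1 + v2 - c)) := by
    rw [add_comm v2 v1, max_assoc, max_left_comm (v2 - b), ← max_assoc]
  simp only [pay]
  rw [hm, add_comm v2 v1, max_left_comm]

theorem pay_le_s14 {X : ℝ} (hX : 0 ≤ X)
    (h1 : 0 ≤ v1 - a → v2 - b ≤ v1 - a → v1 + v2 - c ≤ v1 - a → a ≤ X)
    (h2 : 0 ≤ v2 - b → v1 - a ≤ v2 - b → v1 + v2 - c ≤ v2 - b → b ≤ X)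
    (h3 : 0 ≤ v1 + v2 - c → v1 - a ≤ v1 + v2 - c → v2 - b ≤ v1 + v2 - c → c ≤ X) :
    pay a b c v1 v2 ≤ X := by
  simp only [pay]
  refine max_le ?_ (max_le ?_ ?_) <;> split_ifs with h <;> try exact hX
  all_goals have hopt := h.ge; simp only [max_le_iff] at hopt
  · exact h1 hopt.1.1 hopt.2.1 hopt.2.2
  · exact h2 hopt.1.1 hopt.1.2 hopt.2.2
  · exact h3 hopt.1.1 hopt.1.2 hopt.2.1

theorem le_pay_of_item₁_optimal (h0 : a ≤ v1) (h2 : v2 - b ≤ v1 - a)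
    (h3 : v1 + v2 - c ≤ v1 - a) : a ≤ pay a b c v1 v2 := by
  have hopt : v1 - a = max (max 0 (v1 - a)) (max (v2 - b) (v1 + v2 - c)) :=
    le_antisymm (le_max_of_le_left (le_max_right _ _))
      (max_le (max_le (sub_nonneg.mpr h0) le_rfl) (max_le h2 h3))
  simp only [pay]
  exact le_max_of_le_left (if_pos hopt).ge

theorem le_pay_of_item₂_optimal (h0 : b ≤ v2) (h1 : v1 - a ≤ v2 - b)
    (h3 : v1 + v2 - c ≤ v2 - b) : b ≤ pay a b c v1 v2 := by
  rw [pay_comm]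
  exact le_pay_of_item₁_optimal h0 h1 (by linarith)

theorem le_pay_of_bundle_optimal (h0 : c ≤ v1 + v2) (h1 : v1 - a ≤ v1 + v2 - c)
    (h2 : v2 - b ≤ v1 + v2 - c) : c ≤ pay a b c v1 v2 := by
  have hopt : v1 + v2 - c = max (max 0 (v1 - a)) (max (v2 - b) (v1 + v2 - c)) :=
    le_antisymm (le_max_of_le_right (le_max_right _ _))
      (max_le (max_le (sub_nonneg.mpr h0) h1) (max_le h2 le_rfl))
  simp only [pay]
  exact le_max_of_le_right (le_max_of_le_right (if_pos hopt).ge)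

theorem pay_le_add (hv1 : 0 ≤ v1) (hv2 : 0 ≤ v2) : pay a b c v1 v2 ≤ v1 + v2 :=
  pay_le_s14 (by positivity) (fun _ _ _ => by linarith) (fun _ _ _ => by linarith)
    (fun _ _ _ => by linarith)

theorem pay_le_bundle_price (hac : a ≤ c) (hbc : b ≤ c) (hc : 0 ≤ c) : pay a b c v1 v2 ≤ c :=
  pay_le_s14 hc (fun _ _ _ => hac) (fun _ _ _ => hbc) (fun _ _ _ => le_rfl)

theorem pay_le_price₁_add (ha : 0 ≤ a) (hv2 : 0 ≤ v2) : pay a b c v1 v2 ≤ a + v2 :=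
  pay_le_s14 (by positivity) (fun _ _ _ => by linarith) (fun _ _ _ => by linarith)
    (fun _ _ _ => by linarith)

theorem pay_le_value₂_of_lt (h1 : v1 < a) (h12 : v1 + v2 < c) (hv2 : 0 ≤ v2) :
    pay a b c v1 v2 ≤ v2 :=
  pay_le_s14 hv2 (fun _ _ _ => by linarith) (fun _ _ _ => by linarith) (fun _ _ _ => by linarith)

theorem pay_le_value₁_of_lt (h2 : v2 < b) (h12 : v1 + v2 < c) (hv1 : 0 ≤ v1) :
    pay a b c v1 v2 ≤ v1 := by
  rw [pay_comm]
  exact pay_le_value₂_of_lt h2 (by linarith) hv1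

end Payment

section GapDistribution

noncomputable def gapDist (ε : ℝ) : Measure (ℝ × ℝ) :=
  ENNReal.ofReal (1 / 2 - ε) • Measure.dirac ((4 : ℝ), (0 : ℝ)) +
  ENNReal.ofReal (1 / 2 - ε) • Measure.dirac ((0 : ℝ), (4 : ℝ)) +
  ENNReal.ofReal (2 * ε) • Measure.dirac (1 / ε, 1 / ε)

variable {ε : ℝ}

theorem integrable_pay_smul_dirac (a b c : ℝ) {w : ENNReal} (hw : w ≠ ⊤) (x : ℝ × ℝ) :
    Integrable (fun v : ℝ × ℝ => pay a b c v.1 v.2) (w • Measure.dirac x) :=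
  (integrable_dirac enorm_lt_top).smul_measure hw

theorem rev_smul_dirac (a b c : ℝ) (w : ENNReal) (x : ℝ × ℝ) :
    rev (w • Measure.dirac x) a b c = w.toReal * pay a b c x.1 x.2 := by
  rw [rev, integral_smul_measure, integral_dirac, smul_eq_mul]

theorem rev_gapDist (hε : 0 ≤ ε) (hε' : ε ≤ 1 / 2) (a b c : ℝ) :
    rev (gapDist ε) a b c =
      (1 / 2 - ε) * (pay a b c 4 0 + pay a b c 0 4) + 2 * ε * pay a b c (1 / ε) (1 / ε) := by
  have hint (r : ℝ) := integrable_pay_smul_dirac a b c (ENNReal.ofReal_ne_top (r := r))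
  rw [gapDist, rev, integral_add_measure ((hint _ _).add_measure (hint _ _)) (hint _ _),
    integral_add_measure (hint _ _) (hint _ _), ← rev, ← rev, ← rev, rev_smul_dirac, rev_smul_dirac,
    rev_smul_dirac, ENNReal.toReal_ofReal (by linarith), ENNReal.toReal_ofReal (by linarith)]
  ring

theorem rev_gapDist_comm (hε : 0 ≤ ε) (hε' : ε ≤ 1 / 2) (a b c : ℝ) :
    rev (gapDist ε) a b c = rev (gapDist ε) b a c := by
  simp only [rev_gapDist hε hε', pay_comm a b c]
  ring

theorem rev_gapDist_le (hε : 0 ≤ ε) (hε' : ε ≤ 1 / 2) {a b c P₁ P₂ Q : ℝ}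
    (hP₁ : pay a b c 4 0 ≤ P₁) (hP₂ : pay a b c 0 4 ≤ P₂) (hQ : pay a b c (1 / ε) (1 / ε) ≤ Q) :
    rev (gapDist ε) a b c ≤ (1 / 2 - ε) * (P₁ + P₂) + 2 * ε * Q := by
  rw [rev_gapDist hε hε']
  exact add_le_add (mul_le_mul_of_nonneg_left (add_le_add hP₁ hP₂) (by linarith))
    (mul_le_mul_of_nonneg_left hQ (by positivity))

theorem six_sub_le_rev_gapDist (hε : 0 < ε) (hε' : ε ≤ 1 / 4) :
    6 - 8 * ε ≤ rev (gapDist ε) 4 4 (1 / ε) := by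
  have hinv : 4 ≤ 1 / ε := by rw [le_div_iff₀ hε]; linarith
  have hlow₁ : 4 ≤ pay 4 4 (1 / ε) 4 0 := le_pay_of_item₁_optimal le_rfl (by norm_num) (by linarith)
  have hlow₂ : 4 ≤ pay 4 4 (1 / ε) 0 4 := le_pay_of_item₂_optimal le_rfl (by norm_num) (by linarith)
  have hhigh : 1 / ε ≤ pay 4 4 (1 / ε) (1 / ε) (1 / ε) :=
    le_pay_of_bundle_optimal (by linarith) (by linarith) (by linarith)
  have hrev := rev_gapDist hε.le (by linarith) 4 4 (1 / ε)
  have hweight : 2 * ε * (1 / ε) = 2 := by field_simp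
  nlinarith

theorem rev_gapDist_le_eight (hε : 0 < ε) (hε' : ε ≤ 1 / 2) (a b c : ℝ) :
    rev (gapDist ε) a b c ≤ 8 := by
  have hinv : 0 < 1 / ε := by positivity
  refine (rev_gapDist_le hε.le hε'
    (pay_le_add (by norm_num) le_rfl) (pay_le_add le_rfl (by norm_num))
    (pay_le_add hinv.le hinv.le)).trans ?_
  field_simp
  linarith

theorem rev_gapDist_le_of_submodular (hε : 0 < ε) (hε' : ε ≤ 1 / 2) {a b c : ℝ} (ha : 0 ≤ a)
    (hb : 0 ≤ b) (hab : max a b ≤ c) (hc : c ≤ a + b) : rev (gapDist ε) a b c ≤ 4 + 8 * ε := by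
  wlog hle : a ≤ b generalizing a b
  · rw [rev_gapDist_comm hε.le hε']
    exact this hb ha (by rwa [max_comm]) (by linarith) (by linarith)
  obtain ⟨hac, hbc⟩ := max_le_iff.mp hab
  have hinv : 0 < 1 / ε := by positivity
  rcases le_or_gt b 4 with hb4 | hb4
  · refine (rev_gapDist_le hε.le hε' (Q := 8)
      (pay_le_add (by norm_num) le_rfl) (pay_le_add le_rfl (by norm_num))
      ((pay_le_bundle_price hac hbc (ha.trans hac)).trans (by linarith))).trans ?_
    linarith
  rcases le_or_gt a 4 with ha4 | ha4
  · refine (rev_gapDist_le hε.le hε'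
      (pay_le_add (by norm_num) le_rfl) (pay_le_value₁_of_lt hb4 (by linarith) le_rfl)
      (pay_le_price₁_add ha hinv.le)).trans ?_
    field_simp
    nlinarith
  · refine (rev_gapDist_le hε.le hε'
      (pay_le_value₂_of_lt ha4 (by linarith) le_rfl) (pay_le_value₁_of_lt hb4 (by linarith) le_rfl)
      (pay_le_add hinv.le hinv.le)).trans ?_
    field_simp
    linarith

end GapDistribution

theorem stmt14 (ε : ℝ) (hε : 0 < ε) (hε' : ε < 1 / 100) :
    let μ : Measure (ℝ × ℝ) :=
      ENNReal.ofReal (1 / 2 - ε) • Measure.dirac ((4 : ℝ), (0 : ℝ)) +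
      ENNReal.ofReal (1 / 2 - ε) • Measure.dirac ((0 : ℝ), (4 : ℝ)) +
      ENNReal.ofReal (2 * ε) • Measure.dirac (1 / ε, 1 / ε)
    (6 - 8 * ε ≤ rev μ 4 4 (1 / ε)) ∧
    (∀ a b c : ℝ, 0 ≤ a → 0 ≤ b → max a b ≤ c → c ≤ a + b → rev μ a b c ≤ 4 + 8 * ε) ∧
    (3 / 2 - 6 * ε) *
        sSup {r : ℝ | ∃ a b c : ℝ, 0 ≤ a ∧ 0 ≤ b ∧ max a b ≤ c ∧ c ≤ a + b ∧ r = rev μ a b c} ≤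
      sSup {r : ℝ | ∃ a b c : ℝ, 0 ≤ a ∧ 0 ≤ b ∧ max a b ≤ c ∧ r = rev μ a b c} := by
  intro μ
  have hmenu : 6 - 8 * ε ≤ rev μ 4 4 (1 / ε) := six_sub_le_rev_gapDist hε (by linarith)
  have hsubmod (a b c : ℝ) : 0 ≤ a → 0 ≤ b → max a b ≤ c → c ≤ a + b → rev μ a b c ≤ 4 + 8 * ε :=
    rev_gapDist_le_of_submodular hε (by linarith)
  refine ⟨hmenu, hsubmod, ?_⟩
  calc _ ≤ (3 / 2 - 6 * ε) * (4 + 8 * ε) := by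
        refine mul_le_mul_of_nonneg_left (Real.sSup_le ?_ (by linarith)) (by linarith)
        rintro r ⟨a, b, c, ha, hb, hab, hc, rfl⟩
        exact hsubmod a b c ha hb hab hc
    _ ≤ 6 - 8 * ε := by nlinarith
    _ ≤ rev μ 4 4 (1 / ε) := hmenu
    _ ≤ _ := by
        refine le_csSup ⟨8, ?_⟩ ⟨4, 4, 1 / ε, by norm_num, by norm_num, ?_, rfl⟩
        · rintro r ⟨a, b, c, -, -, -, rfl⟩
          exact rev_gapDist_le_eight hε (by linarith) a b c
        · rw [max_self, le_div_iff₀ hε]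
          linarith
end
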